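/- Let Σ = {a,b} and let S = {α,β} be the two-element left-zero semigroup, with product xy = x for all x,y ∈ S (so both α and β are idempotent and right-absorbing). Let φ: Σ⁺ → S be the semigroup morphism with φ(a) = α and φ(b) = β. Then there is no φ-weakly-good automaton whose transition relation is deterministic (for every state q and letter a there is at most one q' with (q,a,q') ∈ Δ). -/

import Mathlib

/-- A (nondeterministic) Büchi/finite-word automaton with ordered states. -/
structure Auto (A : Type) where
  Q : Type
  fin : Fintype Q
  lin : LinearOrder Q
  trans : Q → A → Q → Prop
  init : Q
  final : Set Q
  rep : Set Q

namespace Auto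

variable {A : Type} (M : Auto A)

/-- The strict order on states. -/
def slt (p q : M.Q) : Prop := M.lin.lt p q

/-- `pathIn X p w q`: nonempty word `w` labels a run from `p` to `q`
with all intermediate states in `X`. -/
def pathIn (X : Set M.Q) : M.Q → List A → M.Q → Prop
  | _, [], _ => False
  | p, [a], q => M.trans p a q
  | p, a :: b :: w, q => ∃ r, r ∈ X ∧ M.trans p a r ∧ pathIn X r (b :: w) q

/-- `L_{p,X,q}`. -/
def Lset (X : Set M.Q) (p q : M.Q) : Set (List A) := {w | M.pathIn X p w q}

/-- `↓q`. -/
def below (q : M.Q) : Set M.Q := {p | M.slt p q}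

/-- `L_q = L_{q,↓q,q}`. -/
def Lq (q : M.Q) : Set (List A) := M.Lset (M.below q) q q

/-- Accepting run on a nonempty finite word: `ρ i` is the state after reading `i` letters. -/
def FinAccRun (w : List A) (ρ : Fin (w.length + 1) → M.Q) : Prop :=
  ρ 0 = M.init ∧
  (∀ i : Fin w.length, M.trans (ρ i.castSucc) (w.get i) (ρ i.succ)) ∧
  ρ (Fin.last w.length) ∈ M.final

/-- Accepting (Büchi) run on an infinite word. -/
def InfAccRun (w : ℕ → A) (ρ : ℕ → M.Q) : Prop :=
  ρ 0 = M.init ∧ (∀ i, M.trans (ρ i) (w i) (ρ (i + 1))) ∧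
  ∀ n, ∃ m, n ≤ m ∧ ρ m ∈ M.rep

/-- (G1): every finite or infinite word has exactly one accepting run. -/
def G1 : Prop :=
  (∀ w : List A, w ≠ [] → ∃! ρ : Fin (w.length + 1) → M.Q, M.FinAccRun w ρ) ∧
  (∀ w : ℕ → A, ∃! ρ : ℕ → M.Q, M.InfAccRun w ρ)

/-- (G2): each `L_q` is mapped by `φ` to a single idempotent of `S`. -/
def G2 {S : Type} [Semigroup S] (φ : List A → S) : Prop :=
  ∀ q : M.Q, ∃ e : S, e * e = e ∧ ∀ w ∈ M.Lq q, φ w = e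

/-- (G3): the initial state has no incoming transitions and is maximal. -/
def G3 : Prop :=
  (∀ p a, ¬ M.trans p a M.init) ∧ ∀ q : M.Q, q ≠ M.init → M.slt q M.init

/-- `φ`-weakly-good automaton. -/
def WeaklyGood {S : Type} [Semigroup S] (φ : List A → S) : Prop :=
  M.G1 ∧ M.G2 φ ∧ M.G3

/-- (G4) and `φ`-goodness. -/
def Good {S : Type} [Semigroup S] (φ : List A → S) : Prop :=
  M.WeaklyGood φ ∧
  ∃ f : M.Q, M.final = {f} ∧ (∀ a q, ¬ M.trans f a q) ∧
    M.slt f M.init ∧ ∀ q : M.Q, q ≠ M.init → q ≠ f → M.slt q f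

def Deterministic : Prop := ∀ p a q q', M.trans p a q → M.trans p a q' → q = q'

def Complete : Prop := ∀ p a, ∃ q, M.trans p a q

end Auto

/-- The two-element left-zero semigroup `S = {α, β}` with `x * y = x`. -/
inductive LZ : Type
  | α : LZ
  | β : LZ
deriving DecidableEq

instance : Fintype LZ := ⟨{LZ.α, LZ.β}, fun x => by cases x <;> simp⟩

instance : Mul LZ := ⟨fun x _ => x⟩

instance : Semigroup LZ where
  mul_assoc _ _ _ := rfl

/-- The alphabet `Σ = {a, b}` modeled as `Bool` (`a = true`, `b = false`);
`φ(a) = α`, `φ(b) = β`, so `φ(w)` is determined by the first letter of `w`. -/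
def phiLZ : List Bool → LZ
  | [] => LZ.α
  | x :: _ => if x then LZ.α else LZ.β

/-!
A deterministic automaton that accepts every nonempty finite word has an outgoing transition on
every letter at each reachable state. Let `q` be the largest state of a bottom strongly connected
component of the reachable part. Then the `a`- and the `b`-transition out of `q` both lead back to
`q` through states below `q`, so `L_q` contains a word starting with `a` and one starting with
`b`; the left-zero morphism sends them to `α ≠ β`, contradicting (G2).
-/

theorem Relation.exists_reflTransGen_bottom_max {α : Type*} [Finite α] [LinearOrder α]
    (r : α → α → Prop) (a : α) :
    ∃ q, ReflTransGen r a q ∧ ∀ p, ReflTransGen r q p → p ≤ q ∧ ReflTransGen r p q := by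
  classical
  have := Fintype.ofFinite α
  let reach (b : α) : Finset α := Finset.univ.filter (ReflTransGen r b)
  have mem_reach {b c : α} : c ∈ reach b ↔ ReflTransGen r b c := by simp [reach]
  -- a vertex reachable from `a` with the fewest reachable vertices lies in a bottom component
  obtain ⟨b, hab, hb⟩ := (reach a).exists_min_image (fun b => (reach b).card) ⟨a, mem_reach.2 .refl⟩
  have bottom : ∀ c, ReflTransGen r b c → ReflTransGen r c b := fun c hbc => by
    have hsub : reach c ⊆ reach b := fun d hd => mem_reach.2 (hbc.trans (mem_reach.1 hd))
    have heq := Finset.eq_of_subset_of_card_le hsub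
      (hb c (mem_reach.2 ((mem_reach.1 hab).trans hbc)))
    exact mem_reach.1 (heq ▸ mem_reach.2 .refl)
  have hne : (reach b).Nonempty := ⟨b, mem_reach.2 .refl⟩
  have hbq : ReflTransGen r b ((reach b).max' hne) := mem_reach.1 ((reach b).max'_mem hne)
  refine ⟨(reach b).max' hne, (mem_reach.1 hab).trans hbq, fun p hqp => ?_⟩
  have hbp := hbq.trans hqp
  exact ⟨(reach b).le_max' p (mem_reach.2 hbp), (bottom p hbp).trans hbq⟩

namespace Auto

variable {A : Type} {M : Auto A}

def Edge (M : Auto A) (p q : M.Q) : Prop := ∃ a, M.trans p a q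

def RunTo (M : Auto A) : M.Q → List A → M.Q → Prop
  | p, [], q => p = q
  | p, a :: w, q => ∃ r, M.trans p a r ∧ M.RunTo r w q

theorem runTo_append {p r : M.Q} {u v : List A} :
    M.RunTo p (u ++ v) r ↔ ∃ s, M.RunTo p u s ∧ M.RunTo s v r := by
  induction u generalizing p with
  | nil => simp [RunTo]
  | cons a u ih =>
    constructor
    · rintro ⟨s, hs, h⟩
      obtain ⟨t, ht, h⟩ := ih.1 h
      exact ⟨t, ⟨s, hs, ht⟩, h⟩
    · rintro ⟨t, ⟨s, hs, ht⟩, h⟩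
      exact ⟨s, hs, ih.2 ⟨t, ht, h⟩⟩

theorem RunTo.eq_of_deterministic (hdet : M.Deterministic) {p q q' : M.Q} {w : List A}
    (h : M.RunTo p w q) (h' : M.RunTo p w q') : q = q' := by
  induction w generalizing p with
  | nil => exact h.symm.trans h'
  | cons a w ih =>
    obtain ⟨r, hr, h⟩ := h
    obtain ⟨r', hr', h'⟩ := h'
    exact ih h (hdet p a r r' hr hr' ▸ h')

theorem exists_runTo_of_reflTransGen {p q : M.Q} (h : Relation.ReflTransGen M.Edge p q) :
    ∃ w, M.RunTo p w q := by
  induction h using Relation.ReflTransGen.head_induction_on with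
  | refl => exact ⟨[], rfl⟩
  | head hpr _ ih =>
    obtain ⟨a, ha⟩ := hpr
    obtain ⟨w, hw⟩ := ih
    exact ⟨a :: w, _, ha, hw⟩

theorem runTo_of_forall_trans {w : List A} {ρ : Fin (w.length + 1) → M.Q}
    (hρ : ∀ i : Fin w.length, M.trans (ρ i.castSucc) (w.get i) (ρ i.succ)) :
    M.RunTo (ρ 0) w (ρ (Fin.last w.length)) := by
  induction w with
  | nil => rfl
  | cons a w ih => exact ⟨ρ 1, hρ 0, ih (ρ := ρ ∘ Fin.succ) fun i => hρ i.succ⟩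

theorem FinAccRun.runTo {w : List A} {ρ : Fin (w.length + 1) → M.Q} (h : M.FinAccRun w ρ) :
    M.RunTo M.init w (ρ (Fin.last w.length)) :=
  h.1 ▸ runTo_of_forall_trans h.2.1

/-- By determinism, the accepting run on `w ++ [a]`, where `w` leads to `p`, passes through `p`. -/
theorem exists_trans_of_reflTransGen_init (hacc : ∀ w : List A, w ≠ [] → ∃ ρ, M.FinAccRun w ρ)
    (hdet : M.Deterministic) {p : M.Q} (hp : Relation.ReflTransGen M.Edge M.init p) (a : A) :
    ∃ q, M.trans p a q := by
  obtain ⟨w, hw⟩ := exists_runTo_of_reflTransGen hp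
  obtain ⟨ρ, hρ⟩ := hacc (w ++ [a]) (by simp)
  obtain ⟨s, hs, q, hq, -⟩ := runTo_append.1 hρ.runTo
  exact ⟨q, hs.eq_of_deterministic hdet hw ▸ hq⟩

theorem pathIn_cons {X : Set M.Q} {p r q : M.Q} {a : A} {w : List A}
    (ha : M.trans p a r) (hr : r ∈ X) (hw : M.pathIn X r w q) : M.pathIn X p (a :: w) q := by
  cases w with
  | nil => exact hw.elim
  | cons b w => exact ⟨r, hr, ha, hw⟩

/-- Cut the return path at its first visit to `q`. -/
theorem exists_mem_Lq_head {q t : M.Q} {a : A}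
    (hbelow : ∀ p, Relation.ReflTransGen M.Edge q p → p ≠ q → p ∈ M.below q)
    (ha : M.trans q a t) (hret : Relation.ReflTransGen M.Edge t q) :
    ∃ u ∈ M.Lq q, u.head? = some a := by
  suffices key : ∀ {p : M.Q} {b : A}, Relation.ReflTransGen M.Edge q t → M.trans p b t →
      ∃ u, M.pathIn (M.below q) p u q ∧ u.head? = some b from
    key (.single ⟨a, ha⟩) ha
  clear ha
  induction hret using Relation.ReflTransGen.head_induction_on with
  | refl => exact fun _ hb => ⟨[_], hb, rfl⟩
  | @head t t' htt' _ ih =>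
    intro p b hqt hb
    by_cases htq : t = q
    · exact ⟨[b], htq ▸ hb, rfl⟩
    obtain ⟨c, hc⟩ := htt'
    obtain ⟨v, hv, -⟩ := ih (hqt.tail ⟨c, hc⟩) hc
    exact ⟨b :: v, pathIn_cons hb (hbelow t hqt htq) hv, rfl⟩

end Auto

theorem phiLZ_eq_of_head? {w : List Bool} {x : Bool} (h : w.head? = some x) :
    phiLZ w = phiLZ [x] := by
  cases w with
  | nil => cases h
  | cons y w => cases h; rfl

/-- There is no `φ`-weakly-good automaton with a deterministic transition
relation for the morphism onto the two-element left-zero semigroup. -/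
theorem no_deterministic_weaklyGood_leftZero :
    ¬ ∃ M : Auto Bool, M.WeaklyGood phiLZ ∧ M.Deterministic := by
  rintro ⟨M, ⟨⟨hacc, -⟩, hG2, -⟩, hdet⟩
  let _ := M.fin
  let _ := M.lin
  obtain ⟨q, hq, hbottom⟩ := Relation.exists_reflTransGen_bottom_max M.Edge M.init
  have hloop (x : Bool) : ∃ u ∈ M.Lq q, u.head? = some x := by
    obtain ⟨t, ht⟩ :=
      Auto.exists_trans_of_reflTransGen_init (fun w hw => (hacc w hw).exists) hdet hq x
    exact Auto.exists_mem_Lq_head (fun p hqp hpq => lt_of_le_of_ne (hbottom p hqp).1 hpq) ht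
      (hbottom t (.single ⟨x, ht⟩)).2
  obtain ⟨e, -, he⟩ := hG2 q
  obtain ⟨ua, hua, ha⟩ := hloop true
  obtain ⟨ub, hub, hb⟩ := hloop false
  have hαβ : phiLZ [true] = phiLZ [false] := by
    rw [← phiLZ_eq_of_head? ha, he ua hua, ← he ub hub, phiLZ_eq_of_head? hb]
  cases hαβ
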